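/- arXiv:2209.00712 — 5 statements merged into one kernel-verified Lean document; each statement's English description precedes it below -/
import Mathlib

section
/- For a polytope P ⊂ R^d and a d×d matrix A with rows h₁,…,h_d, if B is the matrix with rows h₁,…,h_{d−1}, −(h₁+⋯+h_d), then l₁(AP) = l₁(BP). -/
open scoped BigOperators

/-- Lattice width of a set `P ⊆ ℝ^d` in direction `h`:
`max_{x∈P} ⟨h,x⟩ − min_{x∈P} ⟨h,x⟩`. -/
noncomputable def width {d : ℕ} (P : Set (Fin d → ℝ)) (h : Fin d → ℝ) : ℝ :=
  sSup ((fun x => ∑ i, h i * x i) '' P) - sInf ((fun x => ∑ i, h i * x i) '' P)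

/-- `l₁(P) = max_{x∈P}(x₁+⋯+x_d) − Σᵢ min_{x∈P} xᵢ`. -/
noncomputable def l1 {d : ℕ} (P : Set (Fin d → ℝ)) : ℝ :=
  sSup ((fun x => ∑ i, x i) '' P) - ∑ i, sInf ((fun x => x i) '' P)

/-- `P` is a lattice polytope: the convex hull of a nonempty finite set of integer points. -/
def IsLatticePolytope {d : ℕ} (P : Set (Fin d → ℝ)) : Prop :=
  ∃ V : Finset (Fin d → ℝ), V.Nonempty ∧ (∀ v ∈ V, ∀ i, ∃ m : ℤ, v i = (m : ℝ)) ∧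
    P = convexHull ℝ (V : Set (Fin d → ℝ))

/-- `P` is a polytope: the convex hull of a nonempty finite set of points. -/
def IsPolytope {d : ℕ} (P : Set (Fin d → ℝ)) : Prop :=
  ∃ V : Finset (Fin d → ℝ), V.Nonempty ∧ P = convexHull ℝ (V : Set (Fin d → ℝ))

/-!
Write `S(v)` and `I(v)` for the supremum and infimum of `x ↦ ⟨v, x⟩` on `P`. For a matrix `M`
with rows `mᵢ`, `l₁(MP) = S(∑ᵢ mᵢ) - ∑ᵢ I(mᵢ)`. Replacing the row `h_k` of `A` by `-∑ᵢ hᵢ`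
turns the row sum into `-h_k`, so for `B` the terms `S(-h_k) = -I(h_k)` and
`I(-∑ᵢ hᵢ) = -S(∑ᵢ hᵢ)` just trade places with the corresponding terms for `A`.
On `ℝ`, negation swaps `sSup` and `sInf` for every set, including the junk values taken on
empty or unbounded ones.
-/

open Matrix

theorem sum_updateRow_eq_add_sum_compl {ι κ R α : Type*} [Fintype ι] [DecidableEq ι]
    [AddCommMonoid α] (A : Matrix ι κ R) (k : ι) (r : κ → R) (f : (κ → R) → α) :
    ∑ i, f (A.updateRow k r i) = f r + ∑ i ∈ {k}ᶜ, f (A i) := by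
  rw [Fintype.sum_eq_add_sum_compl k, updateRow_self]
  congr 1
  exact Finset.sum_congr rfl fun i hi => by
    rw [updateRow_ne (Finset.mem_compl.mp hi ∘ Finset.mem_singleton.mpr)]

section

variable {m : ℕ} {κ : Type*} [Fintype κ] (P : Set (κ → ℝ))

theorem l1_image_mulVec (M : Matrix (Fin m) κ ℝ) :
    l1 ((M *ᵥ ·) '' P) =
      sSup ((fun x => (∑ i, M i) ⬝ᵥ x) '' P) - ∑ i, sInf ((fun x => M i ⬝ᵥ x) '' P) := by
  have hsum : (fun x => ∑ i, (M *ᵥ x) i) = fun x => (∑ i, M i) ⬝ᵥ x :=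
    funext fun x => (sum_dotProduct _ _ _).symm
  simp only [l1, Set.image_image, hsum]
  rfl

theorem image_neg_dotProduct (v : κ → ℝ) :
    (fun x => -v ⬝ᵥ x) '' P = -((v ⬝ᵥ ·) '' P) := by
  simp only [neg_dotProduct, ← Set.image_neg_eq_neg, Set.image_image]

theorem sSup_image_neg_dotProduct (v : κ → ℝ) :
    sSup ((fun x => -v ⬝ᵥ x) '' P) = -sInf ((fun x => v ⬝ᵥ x) '' P) := by
  rw [image_neg_dotProduct, Real.sSup_neg]

theorem sInf_image_neg_dotProduct (v : κ → ℝ) :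
    sInf ((fun x => -v ⬝ᵥ x) '' P) = -sSup ((fun x => v ⬝ᵥ x) '' P) := by
  rw [image_neg_dotProduct, Real.sInf_neg]

theorem l1_image_updateRow_neg_sum (A : Matrix (Fin m) κ ℝ) (k : Fin m) :
    l1 ((A.updateRow k (-∑ i, A i) *ᵥ ·) '' P) = l1 ((A *ᵥ ·) '' P) := by
  have hsum : ∑ i, A.updateRow k (-∑ i, A i) i = -A k := by
    rw [sum_updateRow_eq_add_sum_compl A k _ fun v => v,
      Fintype.sum_eq_add_sum_compl k fun i => A i]
    abel
  rw [l1_image_mulVec, l1_image_mulVec, hsum,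
    sum_updateRow_eq_add_sum_compl A k _ fun v => sInf ((v ⬝ᵥ ·) '' P),
    Fintype.sum_eq_add_sum_compl k, sSup_image_neg_dotProduct, sInf_image_neg_dotProduct]
  ring

end

theorem l1_image_eq_of_last_row_replaced_general (d : ℕ) (P : Set (Fin d → ℝ))
    (A B : Matrix (Fin d) (Fin d) ℝ)
    (hB : ∀ i : Fin d, B i = if (i : ℕ) < d - 1 then A i else -(∑ j, A j)) :
    l1 ((fun x => A.mulVec x) '' P) = l1 ((fun x => B.mulVec x) '' P) := by
  cases d with
  | zero => congr!
  | succ n =>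
    have hB' : B = A.updateRow (Fin.last n) (-∑ i, A i) := by
      ext1 i
      rw [hB i]
      rcases Fin.eq_castSucc_or_eq_last i with ⟨j, rfl⟩ | rfl
      · simp [Fin.castSucc_ne_last]
      · simp
    rw [hB']
    exact (l1_image_updateRow_neg_sum P A _).symm

/-- replacing the last row of `A` by minus the sum of all rows of `A`
does not change `l₁` of the image: `l₁(AP) = l₁(BP)`. -/
theorem l1_image_eq_of_last_row_replaced (d : ℕ) (P : Set (Fin d → ℝ)) (hP : IsPolytope P)
    (A B : Matrix (Fin d) (Fin d) ℝ)
    (hB : ∀ i : Fin d, B i = if (i : ℕ) < d - 1 then A i else -(∑ j, A j)) :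
    l1 ((fun x => A.mulVec x) '' P) = l1 ((fun x => B.mulVec x) '' P) :=
  l1_image_eq_of_last_row_replaced_general d P A B hB
end

section
/- Let p₁,…,p_d be nonnegative integers with p_d ≥ 2, α = p₁+⋯+p_{d−1}, k = ⌊(p_d−2)/(α+1)⌋, and assume p_d ≥ α²−α. Then the lattice size of the simplex T = conv{e₁,…,e_{d+1},(p₁,…,p_d,1)} ⊂ R^{d+1} with respect to the standard simplex satisfies ls_Δ(T) ≤ k+3. -/
open scoped BigOperators

/-- The `i`-th standard basis vector of `ℝ^d`. -/
def stdVert (d : ℕ) (i : Fin d) : Fin d → ℝ := fun j => if j = i then 1 else 0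

/-- The extra vertex `(p₁, …, pₙ, q, 1) ∈ ℝ^{n+2}`. -/
def Tvert (n : ℕ) (p : Fin n → ℤ) (q : ℤ) : Fin (n + 2) → ℝ :=
  fun j => if h : (j : ℕ) < n then (p ⟨j, h⟩ : ℝ) else if (j : ℕ) = n then (q : ℝ) else 1

/-- The simplex `T_{p₁…p_{n} q} = conv{e₁,…,e_{n+2}, (p₁,…,pₙ,q,1)} ⊆ ℝ^{n+2}`. -/
noncomputable def Tsimp (n : ℕ) (p : Fin n → ℤ) (q : ℤ) : Set (Fin (n + 2) → ℝ) :=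
  convexHull ℝ (insert (Tvert n p q) (Set.range (stdVert (n + 2))))

/-- Lattice size of `P` with respect to the standard simplex: the smallest `l` such that an
affine unimodular map sends `P` into `lΔ`. -/
noncomputable def lsSimplex {d : ℕ} (P : Set (Fin d → ℝ)) : ℕ :=
  sInf {l : ℕ | ∃ (A : Matrix (Fin d) (Fin d) ℤ) (v : Fin d → ℤ),
    (A.det = 1 ∨ A.det = -1) ∧
    ∀ x ∈ P, (∀ i, (0 : ℝ) ≤ (A.map (fun m : ℤ => (m : ℝ))).mulVec x i + (v i : ℝ)) ∧
      ∑ i, ((A.map (fun m : ℤ => (m : ℝ))).mulVec x i + (v i : ℝ)) ≤ (l : ℝ)}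

/-- Lattice size of `P` with respect to the unit cube: the smallest `l` such that an
affine unimodular map sends `P` into `[0,l]^d`. -/
noncomputable def lsCube {d : ℕ} (P : Set (Fin d → ℝ)) : ℕ :=
  sInf {l : ℕ | ∃ (A : Matrix (Fin d) (Fin d) ℤ) (v : Fin d → ℤ),
    (A.det = 1 ∨ A.det = -1) ∧
    ∀ x ∈ P, ∀ i, (0 : ℝ) ≤ (A.map (fun m : ℤ => (m : ℝ))).mulVec x i + (v i : ℝ) ∧
      (A.map (fun m : ℤ => (m : ℝ))).mulVec x i + (v i : ℝ) ≤ (l : ℝ)}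

/-! Put `α = p₁ + ⋯ + p_{d-1}` and `m = k + 2`. The hypothesis `p_d ≥ α² - α` gives `α ≤ m`, and
the definition of `k` gives `(m - 1) α ≤ p_d ≤ (m - 1) α + m`. The unimodular shear that changes
only the coordinate `x_d`, into `x_d + m - m (x₁ + ⋯ + x_{d-1}) + ((m - 1) α - p_d) x_{d+1}`,
has all its coefficients in `[-m, 0]`, so it sends every `eᵢ` into `(m + 1)Δ`; it sends the apex
`(p₁, …, p_d, 1)` to `(p₁, …, p_{d-1}, m - α, 1)`, whose coordinate sum is `m + 1`. -/

open Matrix Finset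

theorem convex_setOf_affine_mem_dilatedSimplex {ι : Type*} [Fintype ι]
    (B : Matrix ι ι ℝ) (v : ι → ℝ) (l : ℝ) :
    Convex ℝ {x | (∀ i, 0 ≤ (B *ᵥ x) i + v i) ∧ ∑ i, ((B *ᵥ x) i + v i) ≤ l} := by
  have hsum : IsLinearMap ℝ fun y : ι → ℝ => ∑ i, y i :=
    ⟨fun _ _ => sum_add_distrib, fun c _ => (mul_sum _ _ c).symm⟩
  exact (((convex_Ici 0).inter (convex_halfSpace_le hsum l)).translate_preimage_left v
    ).linear_preimage B.mulVecLin

theorem lsSimplex_convexHull_le {d : ℕ} {S : Set (Fin d → ℝ)} {l : ℕ}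
    (A : Matrix (Fin d) (Fin d) ℤ) (v : Fin d → ℤ) (hA : A.det = 1 ∨ A.det = -1)
    (hS : ∀ x ∈ S, (∀ i, (0 : ℝ) ≤ (A.map (fun m : ℤ => (m : ℝ))).mulVec x i + (v i : ℝ)) ∧
      ∑ i, ((A.map (fun m : ℤ => (m : ℝ))).mulVec x i + (v i : ℝ)) ≤ (l : ℝ)) :
    lsSimplex (convexHull ℝ S) ≤ l :=
  Nat.sInf_le ⟨A, v, hA, fun _ hx =>
    convexHull_min hS (convex_setOf_affine_mem_dilatedSimplex _ _ _) hx⟩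

section Shear

variable {ι R : Type*} [DecidableEq ι] [CommRing R]

def shear (r : ι) (w : ι → R) : Matrix ι ι R := 1 + vecMulVec (Pi.single r 1) w

theorem det_shear [Fintype ι] {r : ι} {w : ι → R} (hw : w r = 0) : (shear r w).det = 1 := by
  rw [shear, vecMulVec_eq (ι := Unit), det_one_add_replicateCol_mul_replicateRow,
    dotProduct_single, hw, zero_mul, add_zero]

theorem map_shear {S : Type*} [CommRing S] (f : R →+* S) (r : ι) (w : ι → R) :
    (shear r w).map f = shear r (f ∘ w) := by
  ext i j
  by_cases h : i = r <;> simp [shear, vecMulVec_apply, one_apply, h]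

theorem shear_mulVec [Fintype ι] (r : ι) (w x : ι → R) :
    shear r w *ᵥ x = x + Pi.single r (w ⬝ᵥ x) := by
  ext i
  by_cases h : i = r <;> simp [shear, add_mulVec, vecMulVec_mulVec, h]

end Shear

theorem lsSimplex_convexHull_le_of_shear {d : ℕ} {S : Set (Fin d → ℝ)} {l : ℕ}
    (r : Fin d) (w : Fin d → ℤ) (hw : w r = 0) (c : ℤ)
    (hS : ∀ x ∈ S, (∀ i, 0 ≤ x i) ∧ 0 ≤ x r + ∑ j, (w j : ℝ) * x j + c ∧
      ∑ i, x i + ∑ j, (w j : ℝ) * x j + c ≤ l) :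
    lsSimplex (convexHull ℝ S) ≤ l := by
  refine lsSimplex_convexHull_le (shear r w) (Pi.single r c) (.inl (det_shear hw)) fun x hx => ?_
  obtain ⟨hx_nonneg, hx_r, hx_sum⟩ := hS x hx
  have himage : ∀ i, (((shear r w).map (fun m : ℤ => (m : ℝ))) *ᵥ x) i +
      ((Pi.single r c : Fin d → ℤ) i : ℝ) =
        x i + (Pi.single r (∑ j, (w j : ℝ) * x j + c) : Fin d → ℝ) i := by
    intro i
    rw [show (fun m : ℤ => (m : ℝ)) = Int.castRingHom ℝ from rfl, map_shear, shear_mulVec]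
    by_cases h : i = r
    · subst h; simp [dotProduct, add_assoc]
    · simp [h]
  simp only [himage, sum_add_distrib, sum_pi_single']
  refine ⟨fun i => ?_, by simpa [add_assoc] using hx_sum⟩
  by_cases h : i = r
  · subst h; simpa [add_assoc] using hx_r
  · simpa [h] using hx_nonneg i

theorem lsSimplex_convexHull_insert_range_stdVert_le {d : ℕ} (t : Fin d → ℝ) (r : Fin d)
    (w : Fin d → ℤ) (hw : w r = 0) (m : ℕ) (hw_bound : ∀ j, -(m : ℤ) ≤ w j ∧ w j ≤ 0)
    (ht_nonneg : ∀ i, 0 ≤ t i) (ht_r : 0 ≤ t r + ∑ j, (w j : ℝ) * t j + m)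
    (ht_sum : ∑ i, t i + ∑ j, (w j : ℝ) * t j + m ≤ m + 1) :
    lsSimplex (convexHull ℝ (insert t (Set.range (stdVert d)))) ≤ m + 1 := by
  refine lsSimplex_convexHull_le_of_shear r w hw m ?_
  rintro x (rfl | ⟨j, rfl⟩)
  · exact ⟨ht_nonneg, ht_r, by exact_mod_cast ht_sum⟩
  · have hwj : (-(m : ℝ)) ≤ w j ∧ (w j : ℝ) ≤ 0 := by exact_mod_cast hw_bound j
    have hr : (0 : ℝ) ≤ stdVert d j r := by unfold stdVert; split_ifs <;> norm_num
    simp only [stdVert, mul_ite, mul_one, mul_zero, sum_ite_eq', mem_univ, if_true] at hr ⊢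
    refine ⟨fun i => by split_ifs <;> norm_num, by push_cast; linarith, ?_⟩
    push_cast; linarith

section Tsimp

variable {n : ℕ} (p : Fin n → ℤ) (q : ℤ)

theorem sum_univ_fin_add_two {M : Type*} [AddCommMonoid M] (f : Fin (n + 2) → M) :
    ∑ i, f i =
      ∑ i : Fin n, f i.castSucc.castSucc + f (Fin.last n).castSucc + f (Fin.last (n + 1)) := by
  rw [Fin.sum_univ_castSucc, Fin.sum_univ_castSucc]

@[simp] theorem Tvert_castSucc_castSucc (i : Fin n) : Tvert n p q i.castSucc.castSucc = p i := by
  simp [Tvert]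

@[simp] theorem Tvert_castSucc_last : Tvert n p q (Fin.last n).castSucc = q := by
  simp [Tvert]

@[simp] theorem Tvert_last : Tvert n p q (Fin.last (n + 1)) = 1 := by
  simp [Tvert]

theorem Tvert_nonneg (hp : ∀ i, 0 ≤ p i) (hq : 0 ≤ q) (j : Fin (n + 2)) : 0 ≤ Tvert n p q j := by
  unfold Tvert; split_ifs <;> simp [hp, hq]

def TshearVec (m b : ℤ) : Fin (n + 2) → ℤ := Fin.snoc (Fin.snoc (fun _ => -m) 0) b

theorem lsSimplex_Tsimp_le (hp : ∀ i, 0 ≤ p i) (m : ℕ) (hαm : ∑ i, p i ≤ m)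
    (hq_lower : (m - 1) * ∑ i, p i ≤ q) (hq_upper : q ≤ (m - 1) * ∑ i, p i + m) :
    lsSimplex (Tsimp n p q) ≤ m + 1 := by
  set α := ∑ i, p i
  set b := (m - 1) * α - q with hb_def
  have hb : -(m : ℤ) ≤ b ∧ b ≤ 0 := ⟨by linarith, by linarith⟩
  set w : Fin (n + 2) → ℤ := TshearVec m b
  have hdot : ∑ j, (w j : ℝ) * Tvert n p q j = -(q + α) := by
    simp [sum_univ_fin_add_two, w, TshearVec, b, α, ← mul_sum]
    ring
  have hsum : ∑ j, Tvert n p q j = α + q + 1 := by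
    simp [sum_univ_fin_add_two, α]
  have hα0 : 0 ≤ α := sum_nonneg fun i _ => hp i
  have hq0 : 0 ≤ q := by
    rcases Nat.eq_zero_or_pos m with rfl | hm <;> push_cast at * <;> nlinarith
  have hαm' : (α : ℝ) ≤ m := by exact_mod_cast hαm
  refine lsSimplex_convexHull_insert_range_stdVert_le _ (Fin.last n).castSucc w
    (by simp [w, TshearVec]) m ?_ (Tvert_nonneg p q hp hq0) ?_ ?_
  · refine Fin.lastCases ?_ (Fin.lastCases ?_ fun i => ?_) <;> simp [w, TshearVec, hb]
  · rw [hdot, Tvert_castSucc_last]; linarith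
  · rw [hdot, hsum]; linarith

end Tsimp

/-- with `α = p₁+⋯+p_{d−1}`, `k = ⌊(p_d−2)/(α+1)⌋` and `p_d ≥ α²−α`,
the lattice size of `T = conv{e₁,…,e_{d+1},(p₁,…,p_d,1)}` with respect to the standard
simplex satisfies `ls_Δ(T) ≤ k+3`. (Here `n = d−1`, `q = p_d`.) -/
theorem lsSimplex_T_le (n : ℕ) (p : Fin n → ℤ) (hp : ∀ i, 0 ≤ p i) (q : ℤ) (hq : 2 ≤ q)
    (α k : ℤ) (hα : α = ∑ i, p i) (hk : k = (q - 2) / (α + 1)) (hbig : α ^ 2 - α ≤ q) :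
    (lsSimplex (Tsimp n p q) : ℤ) ≤ k + 3 := by
  have hα0 : 0 ≤ α := hα ▸ sum_nonneg fun i _ => hp i
  have hk_floor : k * (α + 1) ≤ q - 2 ∧ q - 2 < (k + 1) * (α + 1) :=
    hk ▸ ⟨Int.ediv_mul_le _ (by omega), Int.lt_ediv_add_one_mul_self _ (by omega)⟩
  have hk0 : 0 ≤ k := hk ▸ Int.ediv_nonneg (by omega) (by omega)
  -- `(α - 2)(α + 1) = α² - α - 2 ≤ q - 2 < (k + 1)(α + 1)`
  have hαk : α ≤ k + 2 := by nlinarith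
  lift k to ℕ using hk0
  subst hα
  have := lsSimplex_Tsimp_le p q hp (k + 2) (by push_cast; omega) (by push_cast; nlinarith)
    (by push_cast; nlinarith)
  omega
end

section
/- Let p₁,…,p_d be nonnegative integers with p_d ≥ 2, α = p₁+⋯+p_{d−1}, and k = ⌊(p_d−2)/(α+1)⌋. If h = (a₁,…,a_{d+1}) ∈ Z^{d+1} satisfies w_h(T_{p₁…p_d}) ≤ k+2, then a_d ∈ {−1, 0, 1}. -/
open scoped BigOperators

/-!
A lattice width is at least the spread `⟨h,u⟩ − ⟨h,v⟩` between any two vertices. Suppose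
`a_d ≥ 2` and let `a_j` be the least coordinate of `h`. The spread between `e_d` and `e_j` gives
`a_j ≥ a_d − (k+2)`, so the extra vertex satisfies
`⟨h,v⟩ − a_j ≥ α a_j + p_d a_d ≥ a_d (α + p_d) − (k+2) α ≥ 2 p_d − k α > k + 2`,
the last step because `k (α+1) ≤ p_d − 2`. The case `a_d ≤ −2` follows by replacing `h` with `−h`.
-/

theorem sub_le_width {d : ℕ} {P : Set (Fin d → ℝ)} (hP : IsCompact P) (h : Fin d → ℝ)
    {u v : Fin d → ℝ} (hu : u ∈ P) (hv : v ∈ P) :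
    ∑ i, h i * u i - ∑ i, h i * v i ≤ width P h := by
  have hcont : Continuous fun x : Fin d → ℝ => ∑ i, h i * x i :=
    continuous_finsetSum _ fun i _ => continuous_const.mul (continuous_apply i)
  have hsup := le_csSup (hP.bddAbove_image hcont.continuousOn) (Set.mem_image_of_mem _ hu)
  have hinf := csInf_le (hP.bddBelow_image hcont.continuousOn) (Set.mem_image_of_mem _ hv)
  unfold width
  linarith

theorem width_neg {d : ℕ} (P : Set (Fin d → ℝ)) (h : Fin d → ℝ) : width P (-h) = width P h := by
  have himage : (fun x => ∑ i, (-h) i * x i) '' P = -((fun x => ∑ i, h i * x i) '' P) := by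
    rw [← Set.image_neg_eq_neg, Set.image_image]
    simp [Finset.sum_neg_distrib]
  rw [width, width, himage, Real.sSup_neg, Real.sInf_neg]
  ring

theorem sum_mul_stdVert {d : ℕ} (a : Fin d → ℝ) (i : Fin d) :
    ∑ j, a j * stdVert d i j = a i := by
  simp [stdVert]

section Tsimp

variable (n : ℕ) (p : Fin n → ℤ) (q : ℤ)

theorem isCompact_Tsimp : IsCompact (Tsimp n p q) :=
  ((Set.finite_range _).insert _).isCompact_convexHull ℝ

theorem Tvert_mem_Tsimp : Tvert n p q ∈ Tsimp n p q :=
  subset_convexHull ℝ _ (Set.mem_insert _ _)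

theorem stdVert_mem_Tsimp (i : Fin (n + 2)) : stdVert (n + 2) i ∈ Tsimp n p q :=
  subset_convexHull ℝ _ (Set.mem_insert_of_mem _ ⟨i, rfl⟩)

theorem sum_mul_Tvert (a : Fin (n + 2) → ℤ) :
    ∑ j, (a j : ℝ) * Tvert n p q j =
      ((∑ i : Fin n, a i.castSucc.castSucc * p i + a (Fin.last n).castSucc * q +
        a (Fin.last (n + 1)) : ℤ) : ℝ) := by
  simp [Fin.sum_univ_castSucc, Tvert]

end Tsimp

theorem lt_mul_add_mul_of_sub_le {α q a m : ℤ} (hα : 0 ≤ α) (hq : 2 ≤ q) (ha : 2 ≤ a)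
    (hm : a - m ≤ (q - 2) / (α + 1) + 2) :
    (q - 2) / (α + 1) + 2 < m * α + a * q := by
  set k := (q - 2) / (α + 1)
  have hk : k * (α + 1) ≤ q - 2 := Int.ediv_mul_le _ (by omega)
  nlinarith [mul_le_mul_of_nonneg_right (show a - k - 2 ≤ m by omega) hα,
    mul_le_mul_of_nonneg_right ha (show 0 ≤ α + q by omega)]

theorem coord_le_one_of_width_le {n : ℕ} {p : Fin n → ℤ} (hp : ∀ i, 0 ≤ p i) {q : ℤ}
    (hq : 2 ≤ q) {a : Fin (n + 2) → ℤ}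
    (hw : width (Tsimp n p q) (fun i => (a i : ℝ)) ≤ (((q - 2) / (∑ i, p i + 1) : ℤ) : ℝ) + 2) :
    a ⟨n, by omega⟩ ≤ 1 := by
  obtain ⟨j, hj⟩ := Finite.exists_min a
  have hcoord := (sub_le_width (isCompact_Tsimp n p q) _ (stdVert_mem_Tsimp n p q ⟨n, by omega⟩)
    (stdVert_mem_Tsimp n p q j)).trans hw
  have hextra := (sub_le_width (isCompact_Tsimp n p q) _ (Tvert_mem_Tsimp n p q)
    (stdVert_mem_Tsimp n p q j)).trans hw
  simp only [sum_mul_stdVert, sum_mul_Tvert] at hcoord hextra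
  norm_cast at hcoord hextra
  have hsum : a j * ∑ i, p i ≤ ∑ i : Fin n, a i.castSucc.castSucc * p i := by
    rw [Finset.mul_sum]
    exact Finset.sum_le_sum fun i _ => mul_le_mul_of_nonneg_right (hj _) (hp i)
  by_contra! ha
  have hlarge := lt_mul_add_mul_of_sub_le (Finset.sum_nonneg fun i _ => hp i) hq ha hcoord
  have hlast := hj (Fin.last (n + 1))
  rw [show (Fin.last n).castSucc = ⟨n, by omega⟩ from rfl] at hextra
  omega

/-- if `w_h(T_{p₁…p_d}) ≤ k+2` for an integer vector `h = (a₁,…,a_{d+1})`,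
then `a_d ∈ {−1,0,1}`. (Here `n = d−1`, `q = p_d`, and `a_d` is the coordinate of index `n`.) -/
theorem coord_small_of_width_le (n : ℕ) (p : Fin n → ℤ) (hp : ∀ i, 0 ≤ p i) (q : ℤ)
    (hq : 2 ≤ q) (α k : ℤ) (hα : α = ∑ i, p i) (hk : k = (q - 2) / (α + 1))
    (a : Fin (n + 2) → ℤ)
    (hw : width (Tsimp n p q) (fun i => (a i : ℝ)) ≤ (k : ℝ) + 2) :
    a ⟨n, by omega⟩ = -1 ∨ a ⟨n, by omega⟩ = 0 ∨ a ⟨n, by omega⟩ = 1 := by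
  subst hα hk
  have hle := coord_le_one_of_width_le hp hq hw
  have hge := coord_le_one_of_width_le (a := -a) hp hq (by
    simpa only [Pi.neg_apply, Int.cast_neg, ← Pi.neg_def, width_neg] using hw)
  simp only [Pi.neg_apply] at hge
  omega
end

section
/- Let p₁,…,p_d be positive integers with p_d ≥ 2, α = p₁+⋯+p_{d−1}, k = ⌊(p_d−2)/(α+1)⌋, and suppose p_d ≥ α²−α. Then ls_□(T_{p₁…p_d}) = k+2. -/
open scoped BigOperators

/-!
Write `α = ∑ pᵢ` and let the affine unimodular map `x ↦ A x + v` send `T` into `[0, m]^{n+2}`.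
For a row `b` of `A`, comparing the images of the apex, of the basis vectors `eᵢ` and of
`e_{n+2}` gives `|b_{n+1}| (α + q) ≤ m (α + 1)`, because `b_{n+1}(α + q)` is the value at the apex
minus the value at `e_{n+2}` minus `∑ (bᵢ - b_{n+1}) pᵢ`. Column `n + 1` of `A` is nonzero, so
`α + q ≤ m (α + 1)`, which forces `m ≥ k + 2`. Conversely, for `l = k + 2` replace row `n + 1` of
the identity by `(1 - l, …, 1 - l, 1, 1 - q + (l - 1) α)` and translate it by `l - 1`: the apex goes
to height `l`, and `q ≥ α² - α` guarantees `α ≤ l`, which keeps every other coordinate in range.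
-/

open Matrix

theorem Matrix.det_updateRow_one {ι R : Type*} [Fintype ι] [DecidableEq ι] [CommRing R]
    (j : ι) (r : ι → R) : ((1 : Matrix ι ι R).updateRow j r).det = r j := by
  have hr : ∑ k, r k • (1 : Matrix ι ι R) k = r := by
    ext i
    simp [Matrix.one_apply]
  simpa [hr] using Matrix.det_updateRow_sum (1 : Matrix ι ι R) j r

section MulVec

variable {m n : Type*} [Fintype n]

theorem convex_setOf_mulVec_add_mem_Icc (M : Matrix m n ℝ) (v : m → ℝ) (l : ℝ) :
    Convex ℝ {x : n → ℝ | ∀ i, 0 ≤ (M *ᵥ x) i + v i ∧ (M *ᵥ x) i + v i ≤ l} := by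
  have hpre : {x : n → ℝ | ∀ i, 0 ≤ (M *ᵥ x) i + v i ∧ (M *ᵥ x) i + v i ≤ l} =
      M.mulVecLin ⁻¹' ((· + v) ⁻¹' Set.univ.pi fun _ => Set.Icc 0 l) := by
    ext x
    simp only [Set.mem_ofPred_eq, Set.mem_preimage, Set.mem_univ_pi, Set.mem_Icc,
      Matrix.mulVecLin_apply, Pi.add_apply]
  rw [hpre]
  exact ((convex_pi fun _ _ => convex_Icc 0 l).translate_preimage_left v).linear_preimage _

theorem intCast_mulVec_intCast (A : Matrix m n ℤ) (u : n → ℤ) (i : m) :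
    (A.map (fun z : ℤ => (z : ℝ)) *ᵥ fun j => (u j : ℝ)) i = ((A *ᵥ u) i : ℝ) :=
  (RingHom.map_mulVec (Int.castRingHom ℝ) A u i).symm

end MulVec

theorem stdVert_eq_intCast (d : ℕ) (j : Fin d) :
    stdVert d j = fun k => ((Pi.single j 1 : Fin d → ℤ) k : ℝ) := by
  ext k
  by_cases h : k = j <;> simp [stdVert, h]

def MapsIntoCube {d : ℕ} (P : Set (Fin d → ℝ)) (A : Matrix (Fin d) (Fin d) ℤ) (v : Fin d → ℤ)
    (l : ℕ) : Prop :=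
  ∀ x ∈ P, ∀ i, (0 : ℝ) ≤ (A.map (fun m : ℤ => (m : ℝ))).mulVec x i + (v i : ℝ) ∧
    (A.map (fun m : ℤ => (m : ℝ))).mulVec x i + (v i : ℝ) ≤ (l : ℝ)

theorem lsCube_eq_of_isLeast {d : ℕ} {P : Set (Fin d → ℝ)} {l : ℕ}
    (h : IsLeast {l | ∃ A v, (A.det = 1 ∨ A.det = -1) ∧ MapsIntoCube P A v l} l) :
    lsCube P = l :=
  h.csInf_eq

theorem mapsIntoCube_convexHull_iff {d : ℕ} (u : Fin d → ℤ) (A : Matrix (Fin d) (Fin d) ℤ)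
    (v : Fin d → ℤ) (l : ℕ) :
    MapsIntoCube (convexHull ℝ (insert (fun j => (u j : ℝ)) (Set.range (stdVert d)))) A v l ↔
      (∀ i j, 0 ≤ A i j + v i ∧ A i j + v i ≤ l) ∧
        ∀ i, 0 ≤ (A *ᵥ u) i + v i ∧ (A *ᵥ u) i + v i ≤ l := by
  have hcol : ∀ i j, (A.map (fun z : ℤ => (z : ℝ)) *ᵥ stdVert d j) i = (A i j : ℝ) := by
    intro i j
    simp [stdVert_eq_intCast, intCast_mulVec_intCast]
  constructor
  · intro h
    refine ⟨fun i j => ?_, fun i => ?_⟩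
    · have := h _ (subset_convexHull ℝ _ (Set.mem_insert_of_mem _ ⟨j, rfl⟩)) i
      rw [hcol] at this
      exact_mod_cast this
    · have := h _ (subset_convexHull ℝ _ (Set.mem_insert _ _)) i
      rw [intCast_mulVec_intCast] at this
      exact_mod_cast this
  · rintro ⟨hstd, hu⟩
    refine convexHull_min ?_ (convex_setOf_mulVec_add_mem_Icc _ _ _)
    rintro x (rfl | ⟨j, rfl⟩) i
    · rw [intCast_mulVec_intCast]
      exact_mod_cast hu i
    · rw [hcol]
      exact_mod_cast hstd i j

section Tsimp

variable (n : ℕ) (p : Fin n → ℤ) (q : ℤ)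

def apex : Fin (n + 2) → ℤ := Fin.snoc (Fin.snoc p q : Fin (n + 1) → ℤ) 1

theorem Tvert_eq_intCast_apex : Tvert n p q = fun j => (apex n p q j : ℝ) := by
  ext j
  induction j using Fin.lastCases with
  | last => simp [Tvert, apex]
  | cast j =>
    induction j using Fin.lastCases with
    | last => simp [Tvert, apex]
    | cast i => simp [Tvert, apex]

theorem Tsimp_eq : Tsimp n p q =
    convexHull ℝ (insert (fun j => (apex n p q j : ℝ)) (Set.range (stdVert (n + 2)))) := by
  rw [Tsimp, Tvert_eq_intCast_apex]

theorem dotProduct_apex (b : Fin (n + 2) → ℤ) :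
    b ⬝ᵥ apex n p q = ∑ i, b i.castSucc.castSucc * p i + b (Fin.last n).castSucc * q +
      b (Fin.last (n + 1)) := by
  simp [dotProduct, Fin.sum_univ_castSucc, apex]

variable {n p q}

theorem abs_mul_le_of_row_bounds (hp : ∀ i, 0 ≤ p i) {b : Fin (n + 2) → ℤ} {w m : ℤ}
    (hb : ∀ j, 0 ≤ b j + w ∧ b j + w ≤ m)
    (hu : 0 ≤ b ⬝ᵥ apex n p q + w ∧ b ⬝ᵥ apex n p q + w ≤ m) :
    |b (Fin.last n).castSucc * (∑ i, p i + q)| ≤ m * (∑ i, p i + 1) := by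
  set c := b (Fin.last n).castSucc
  have hdiff : |∑ i, (b i.castSucc.castSucc - c) * p i| ≤ m * ∑ i, p i := by
    rw [Finset.mul_sum]
    refine (Finset.abs_sum_le_sum_abs _ _).trans (Finset.sum_le_sum fun i _ => ?_)
    rw [abs_mul, abs_of_nonneg (hp i)]
    refine mul_le_mul_of_nonneg_right (abs_sub_le_iff.mpr ⟨?_, ?_⟩) (hp i) <;>
      linarith [hb i.castSucc.castSucc, hb (Fin.last n).castSucc]
  have hsplit : c * (∑ i, p i + q) = (b ⬝ᵥ apex n p q + w) - (b (Fin.last (n + 1)) + w) -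
      ∑ i, (b i.castSucc.castSucc - c) * p i := by
    simp only [dotProduct_apex, sub_mul, Finset.sum_sub_distrib, ← Finset.mul_sum]
    ring
  rw [hsplit, abs_le]
  have := abs_le.mp hdiff
  constructor <;> linarith [hb (Fin.last (n + 1)), hu]

theorem add_le_mul_of_mapsIntoCube_Tsimp (hp : ∀ i, 0 ≤ p i) (hq : 0 ≤ q)
    {A : Matrix (Fin (n + 2)) (Fin (n + 2)) ℤ} {v : Fin (n + 2) → ℤ} {m : ℕ}
    (hA : A.det = 1 ∨ A.det = -1) (h : MapsIntoCube (Tsimp n p q) A v m) :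
    ∑ i, p i + q ≤ m * (∑ i, p i + 1) := by
  rw [Tsimp_eq, mapsIntoCube_convexHull_iff] at h
  obtain ⟨i, hi⟩ : ∃ i, A i (Fin.last n).castSucc ≠ 0 := by
    by_contra! hcol
    have := det_eq_zero_of_column_eq_zero _ hcol
    omega
  have hnonneg : 0 ≤ ∑ i, p i + q := add_nonneg (Finset.sum_nonneg fun i _ => hp i) hq
  calc ∑ i, p i + q ≤ |A i (Fin.last n).castSucc| * (∑ i, p i + q) :=
        le_mul_of_one_le_left hnonneg (Int.one_le_abs hi)
    _ = |A i (Fin.last n).castSucc * (∑ i, p i + q)| := by rw [abs_mul, abs_of_nonneg hnonneg]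
    _ ≤ m * (∑ i, p i + 1) := abs_mul_le_of_row_bounds hp (fun j => h.1 i j) (h.2 i)

theorem exists_mapsIntoCube_Tsimp {l : ℕ} (hl : 1 ≤ l) (hp : ∀ i, 0 ≤ p i ∧ p i ≤ l)
    (hq : ((l : ℤ) - 1) * ∑ i, p i ≤ q) (hq' : q ≤ ((l : ℤ) - 1) * ∑ i, p i + l) :
    ∃ A v, (A.det = 1 ∨ A.det = -1) ∧ MapsIntoCube (Tsimp n p q) A v l := by
  set j₀ : Fin (n + 2) := (Fin.last n).castSucc
  set r : Fin (n + 2) → ℤ :=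
    Fin.snoc (Fin.snoc (fun _ => 1 - (l : ℤ)) 1 : Fin (n + 1) → ℤ) (1 - q + (l - 1) * ∑ i, p i)
  -- row `j₀` sends each `eᵢ` (`i < n`) to `0`, `e_{j₀}` to `l`, `e_{n+2}` to `l - q + (l - 1) α`
  -- and the apex to `l`
  refine ⟨(1 : Matrix _ _ ℤ).updateRow j₀ r, Pi.single j₀ ((l : ℤ) - 1), ?_, ?_⟩
  · left
    simp [Matrix.det_updateRow_one, r, j₀]
  rw [Tsimp_eq, mapsIntoCube_convexHull_iff]
  refine ⟨fun i j => ?_, fun i => ?_⟩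
  · by_cases hi : i = j₀
    · subst hi
      induction j using Fin.lastCases with
      | last => simp only [updateRow_self, Fin.snoc_last, Pi.single_eq_same, j₀, r]; omega
      | cast j =>
        induction j using Fin.lastCases with
        | last => simp [r, j₀]
        | cast j => simp [r, j₀]
    · simp only [updateRow_ne hi, Pi.single_eq_of_ne hi, one_apply]
      split_ifs <;> omega
  · by_cases hi : i = j₀
    · subst hi
      simp only [mulVec, updateRow_self, dotProduct_apex, Pi.single_eq_same, r, j₀,
        Fin.snoc_castSucc, Fin.snoc_last, ← Finset.mul_sum]
      constructor <;> linarith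
    · have hrow : ((1 : Matrix _ _ ℤ).updateRow j₀ r *ᵥ apex n p q) i = apex n p q i := by
        simp [mulVec, updateRow_ne hi, one_apply, dotProduct]
      rw [hrow, Pi.single_eq_of_ne hi, add_zero]
      induction i using Fin.lastCases with
      | last => simp only [apex, Fin.snoc_last]; omega
      | cast i =>
        induction i using Fin.lastCases with
        | last => exact absurd rfl hi
        | cast i => simpa [apex] using hp i

end Tsimp

/-- for positive `p₁,…,p_d` with `p_d ≥ 2`, `α = p₁+⋯+p_{d−1}`,
`k = ⌊(p_d−2)/(α+1)⌋` and `p_d ≥ α²−α`, we have `ls_□(T_{p₁…p_d}) = k+2`.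
(Here `n = d−1`, `q = p_d`.) -/
theorem lsCube_T_eq (n : ℕ) (p : Fin n → ℤ) (hp : ∀ i, 0 < p i) (q : ℤ) (hq : 2 ≤ q)
    (α k : ℤ) (hα : α = ∑ i, p i) (hk : k = (q - 2) / (α + 1)) (hbig : α ^ 2 - α ≤ q) :
    (lsCube (Tsimp n p q) : ℤ) = k + 2 := by
  have hα0 : 0 ≤ α := hα ▸ Finset.sum_nonneg fun i _ => (hp i).le
  have hdiv : (α + 1) * k + (q - 2) % (α + 1) = q - 2 := hk ▸ Int.mul_ediv_add_emod _ _
  have hr0 : 0 ≤ (q - 2) % (α + 1) := Int.emod_nonneg _ (by omega)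
  have hr1 : (q - 2) % (α + 1) < α + 1 := Int.emod_lt_of_pos _ (by omega)
  have hk0 : 0 ≤ k := hk ▸ Int.ediv_nonneg (by omega) (by omega)
  have hαk : α ≤ k + 2 := by nlinarith
  obtain ⟨l, hl⟩ : ∃ l : ℕ, (l : ℤ) = k + 2 := ⟨(k + 2).toNat, by omega⟩
  rw [← hl, Nat.cast_inj]
  refine lsCube_eq_of_isLeast ⟨?_, ?_⟩
  · have hple : ∀ i, p i ≤ α := fun i =>
      hα ▸ Finset.single_le_sum (fun j _ => (hp j).le) (Finset.mem_univ i)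
    refine exists_mapsIntoCube_Tsimp (by omega) (fun i => ⟨(hp i).le, by linarith [hple i]⟩)
      ?_ ?_ <;> rw [← hα, hl] <;> linarith
  · rintro m ⟨A, v, hA, hfit⟩
    have hlow := add_le_mul_of_mapsIntoCube_Tsimp (fun i => (hp i).le) (by omega) hA hfit
    rw [← hα] at hlow
    by_contra! hm
    have hm' : (m : ℤ) ≤ k + 1 := by omega
    nlinarith
end

section
/- Let p be an integer with p ≥ 2 and consider the tetrahedron T = conv{(1,0,0),(0,1,0),(0,0,1),(p,p²,1)} ⊂ R³. If h = (a₁,a₂,a₃) ∈ Z³ satisfies a₂ = −1 and w_h(T) ≤ p, then h = (p−1,−1,p−1), and moreover w_h(T) = p. -/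
open scoped BigOperators

lemma isGreatest_image4 {d : ℕ} (f : (Fin d → ℝ) → ℝ) (hf : IsLinearMap ℝ f)
    (A B C D : Fin d → ℝ) :
    IsGreatest (f '' (convexHull ℝ ({A, B, C, D} : Set (Fin d → ℝ))))
      (max (max (f A) (f B)) (max (f C) (f D))) := by
  constructor
  · have hsub := subset_convexHull ℝ ({A, B, C, D} : Set (Fin d → ℝ))
    rcases max_choice (max (f A) (f B)) (max (f C) (f D)) with h1 | h1 <;> rw [h1]
    · rcases max_choice (f A) (f B) with h2 | h2 <;> rw [h2]
      · exact ⟨A, hsub (by simp), rfl⟩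
      · exact ⟨B, hsub (by simp), rfl⟩
    · rcases max_choice (f C) (f D) with h2 | h2 <;> rw [h2]
      · exact ⟨C, hsub (by simp), rfl⟩
      · exact ⟨D, hsub (by simp), rfl⟩
  · rintro y ⟨x, hx, rfl⟩
    have hmem : convexHull ℝ ({A, B, C, D} : Set (Fin d → ℝ)) ⊆
        {x | f x ≤ max (max (f A) (f B)) (max (f C) (f D))} := by
      apply convexHull_min _ (convex_halfSpace_le hf _)
      intro v hv
      simp only [Set.mem_insert_iff, Set.mem_singleton_iff] at hv
      rcases hv with rfl | rfl | rfl | rfl <;> simp [le_max_iff, le_refl]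
    exact hmem hx

lemma isLeast_image4 {d : ℕ} (f : (Fin d → ℝ) → ℝ) (hf : IsLinearMap ℝ f)
    (A B C D : Fin d → ℝ) :
    IsLeast (f '' (convexHull ℝ ({A, B, C, D} : Set (Fin d → ℝ))))
      (min (min (f A) (f B)) (min (f C) (f D))) := by
  constructor
  · have hsub := subset_convexHull ℝ ({A, B, C, D} : Set (Fin d → ℝ))
    rcases min_choice (min (f A) (f B)) (min (f C) (f D)) with h1 | h1 <;> rw [h1]
    · rcases min_choice (f A) (f B) with h2 | h2 <;> rw [h2]
      · exact ⟨A, hsub (by simp), rfl⟩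
      · exact ⟨B, hsub (by simp), rfl⟩
    · rcases min_choice (f C) (f D) with h2 | h2 <;> rw [h2]
      · exact ⟨C, hsub (by simp), rfl⟩
      · exact ⟨D, hsub (by simp), rfl⟩
  · rintro y ⟨x, hx, rfl⟩
    have hmem : convexHull ℝ ({A, B, C, D} : Set (Fin d → ℝ)) ⊆
        {x | min (min (f A) (f B)) (min (f C) (f D)) ≤ f x} := by
      apply convexHull_min _ (convex_halfSpace_ge hf _)
      intro v hv
      simp only [Set.mem_insert_iff, Set.mem_singleton_iff] at hv
      rcases hv with rfl | rfl | rfl | rfl <;> simp [min_le_iff, le_refl]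
    exact hmem hx

/-- for `T = conv{e₁,e₂,e₃,(p,p²,1)}` with `p ≥ 2`, the only integer
direction `h = (a₁,−1,a₃)` with `w_h(T) ≤ p` is `h = (p−1,−1,p−1)`, and then `w_h(T) = p`. -/
theorem direction_unique_p_sq (p : ℤ) (hp : 2 ≤ p) (a : Fin 3 → ℤ) (ha : a 1 = -1)
    (T : Set (Fin 3 → ℝ))
    (hT : T = convexHull ℝ
      ({![(1 : ℝ), 0, 0], ![0, 1, 0], ![0, 0, 1], ![(p : ℝ), (p : ℝ) ^ 2, 1]} :
        Set (Fin 3 → ℝ)))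
    (hw : width T (fun i => (a i : ℝ)) ≤ (p : ℝ)) :
    (a 0 = p - 1 ∧ a 2 = p - 1) ∧ width T (fun i => (a i : ℝ)) = (p : ℝ) := by
  set f : (Fin 3 → ℝ) → ℝ := fun x => ∑ i, (a i : ℝ) * x i with hfdef
  have hf : IsLinearMap ℝ f := by
    constructor
    · intro x y
      simp [hfdef, mul_add, Finset.sum_add_distrib]
    · intro c x
      simp [hfdef, Finset.mul_sum, mul_left_comm]
  have hG := isGreatest_image4 f hf ![(1 : ℝ), 0, 0] ![0, 1, 0] ![0, 0, 1]
      ![(p : ℝ), (p : ℝ) ^ 2, 1]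
  have hL := isLeast_image4 f hf ![(1 : ℝ), 0, 0] ![0, 1, 0] ![0, 0, 1]
      ![(p : ℝ), (p : ℝ) ^ 2, 1]
  have hA : f ![(1 : ℝ), 0, 0] = (a 0 : ℝ) := by simp [hfdef, Fin.sum_univ_three]
  have hB : f ![(0 : ℝ), 1, 0] = -1 := by simp [hfdef, Fin.sum_univ_three, ha]
  have hC : f ![(0 : ℝ), 0, 1] = (a 2 : ℝ) := by simp [hfdef, Fin.sum_univ_three]
  have hD : f ![(p : ℝ), (p : ℝ) ^ 2, 1] = (a 0 : ℝ) * p - (p : ℝ) ^ 2 + (a 2 : ℝ) := by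
    simp [hfdef, Fin.sum_univ_three, ha]; ring
  rw [hA, hB, hC, hD] at hG hL
  set M : ℝ := max (max ((a 0 : ℝ)) (-1)) (max ((a 2 : ℝ)) ((a 0 : ℝ) * p - (p : ℝ) ^ 2 + (a 2 : ℝ))) with hM
  set m : ℝ := min (min ((a 0 : ℝ)) (-1)) (min ((a 2 : ℝ)) ((a 0 : ℝ) * p - (p : ℝ) ^ 2 + (a 2 : ℝ))) with hm
  have hwidth : width T (fun i => (a i : ℝ)) = M - m := by
    rw [width, hT]
    have himg : (fun x => ∑ i, (fun i => (a i : ℝ)) i * x i) = f := rfl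
    rw [himg, hG.csSup_eq, hL.csInf_eq]
  rw [hwidth] at hw ⊢
  -- pairwise inequalities
  have key : ∀ u v : ℝ, u ≤ M → m ≤ v → u - v ≤ (p : ℝ) := fun u v hu hv => by linarith
  have h1 : ((a 0 : ℝ)) - (-1) ≤ p :=
    key _ _ (le_max_of_le_left (le_max_left _ _)) (min_le_of_left_le (min_le_right _ _))
  have h2 : ((a 2 : ℝ)) - (-1) ≤ p :=
    key _ _ (le_max_of_le_right (le_max_left _ _)) (min_le_of_left_le (min_le_right _ _))
  have h3 : ((a 2 : ℝ)) - ((a 0 : ℝ) * p - (p : ℝ) ^ 2 + (a 2 : ℝ)) ≤ p :=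
    key _ _ (le_max_of_le_right (le_max_left _ _)) (min_le_of_right_le (min_le_right _ _))
  have h4 : ((a 0 : ℝ)) - ((a 0 : ℝ) * p - (p : ℝ) ^ 2 + (a 2 : ℝ)) ≤ p :=
    key _ _ (le_max_of_le_left (le_max_left _ _)) (min_le_of_right_le (min_le_right _ _))
  have i1 : a 0 + 1 ≤ p := by exact_mod_cast h1
  have i2 : a 2 + 1 ≤ p := by exact_mod_cast h2
  have i3 : a 2 - (a 0 * p - p ^ 2 + a 2) ≤ p := by exact_mod_cast h3
  have i4 : a 0 - (a 0 * p - p ^ 2 + a 2) ≤ p := by exact_mod_cast h4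
  have ha0 : a 0 = p - 1 := by nlinarith [sq_nonneg (p - a 0 - 1), sq_nonneg p]
  have ha2 : a 2 = p - 1 := by nlinarith
  refine ⟨⟨ha0, ha2⟩, ?_⟩
  have e1 : ((a 0 : ℝ)) = (p : ℝ) - 1 := by exact_mod_cast congrArg (Int.cast : ℤ → ℝ) ha0
  have e2 : ((a 2 : ℝ)) = (p : ℝ) - 1 := by exact_mod_cast congrArg (Int.cast : ℤ → ℝ) ha2
  have hpr : (2 : ℝ) ≤ (p : ℝ) := by exact_mod_cast hp
  rw [hM, hm, e1, e2]
  have hD' : ((p : ℝ) - 1) * (p : ℝ) - (p : ℝ) ^ 2 + ((p : ℝ) - 1) = -1 := by ring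
  rw [hD']
  have e3 : ((p : ℝ) - 1) ⊓ (-1) = -1 := min_eq_right (by linarith)
  have e4 : ((p : ℝ) - 1) ⊔ (-1) = (p : ℝ) - 1 := max_eq_left (by linarith)
  rw [e3, e4, max_self, min_self]
  ring
end
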